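/- arXiv:2602.16339 — 3 statements merged into one kernel-verified Lean document; each statement's English description precedes it below -/
import Mathlib

section
/- Let d ≥ 1, s ∈ (0,1]. For each coordinate direction e_j, there exists C = C(d,s) > 0 such that sup_{x∈ℤ^d} |G_t^{(s)}(x+e_j) - G_t^{(s)}(x)| ≤ C t^{-(d+1)/(2s)} for all t > 0. -/
open MeasureTheory Real

/-- The symbol of the discrete Laplacian on the torus. -/
noncomputable def symb (d : ℕ) (ξ : Fin d → ℝ) : ℝ := 4 * ∑ j, Real.sin (ξ j / 2) ^ 2

/-- The lattice fractional heat kernel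
`G_t^{(s)}(x) = (2π)^{-d} ∫_{[-π,π]^d} e^{-t ω(ξ)^s} e^{i⟨x,ξ⟩} dξ`. -/
noncomputable def latticeKernel (d : ℕ) (s t : ℝ) (x : Fin d → ℤ) : ℂ :=
  ((2 * π) ^ d)⁻¹ •
    ∫ ξ in Set.Icc (fun _ : Fin d => -π) (fun _ : Fin d => π),
      Complex.exp (-(t * (symb d ξ) ^ s : ℝ) + Complex.I * ((∑ j, (x j : ℝ) * ξ j : ℝ) : ℂ))

/-!
The increment is the Fourier integral of `e^{-t ω(ξ)^s} e^{i⟨x,ξ⟩} (e^{iξ_j} - 1)`, and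
`|e^{iξ_j} - 1| ≤ |ξ_j|`. On `[-π, π]^d` Jordan's inequality gives `ω(ξ) ≥ (2/π)² ξ_k²` for every
`k`, so `ω(ξ)^s` dominates the average of the `(2/π)^{2s} |ξ_k|^{2s}` and
`e^{-t ω(ξ)^s} ≤ ∏_k e^{-b |ξ_k|^{2s}}` with `b = t (2/π)^{2s} / d`. After extending the integral to
`ℝ^d` the bound factorizes, each factor `∫ |u|^q e^{-b |u|^{2s}} du` (`q = 1` in direction `j`,
`q = 0` otherwise) is a Gamma value times `b^{-(q+1)/(2s)}`, and the exponents add up to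
`-(d+1)/(2s)`.
-/

open Set

theorem Fintype.prod_apply_pi_single {ι M N : Type*} [Fintype ι] [DecidableEq ι] [Zero M]
    [CommMonoid N] (f : M → N) (j : ι) (a : M) :
    ∏ k, f ((Pi.single j a : ι → M) k) = f a * f 0 ^ (Fintype.card ι - 1) := by
  rw [Fintype.prod_eq_mul_prod_compl j, Pi.single_eq_same,
    Finset.prod_congr rfl fun k hk => by rw [Pi.single_eq_of_ne (by simpa using hk)],
    Finset.prod_const, Finset.card_compl, Finset.card_singleton]

theorem Fintype.prod_abs_rpow_pi_single {ι : Type*} [Fintype ι] [DecidableEq ι] (ξ : ι → ℝ)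
    (j : ι) : ∏ k, |ξ k| ^ (Pi.single j 1 : ι → ℝ) k = |ξ j| := by
  rw [Fintype.prod_eq_single j fun k hk => by rw [Pi.single_eq_of_ne hk, rpow_zero],
    Pi.single_eq_same, rpow_one]

theorem neg_one_lt_pi_single_one {ι : Type*} [DecidableEq ι] (j k : ι) :
    -1 < (Pi.single j 1 : ι → ℝ) k := by
  rcases eq_or_ne k j with rfl | h <;> simp [*]

theorem integral_abs_rpow_mul_exp_neg_mul_abs_rpow {p q b : ℝ} (hp : 0 < p) (hq : -1 < q)
    (hb : 0 < b) :
    ∫ u : ℝ, |u| ^ q * exp (-b * |u| ^ p) = b ^ (-(q + 1) / p) * (2 / p * Gamma ((q + 1) / p)) := by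
  rw [integral_comp_abs (f := fun x => x ^ q * exp (-b * x ^ p)),
    integral_rpow_mul_exp_neg_mul_rpow hp hq hb]
  ring

theorem integrable_abs_rpow_mul_exp_neg_mul_abs_rpow {p q b : ℝ} (hp : 0 < p) (hq : -1 < q)
    (hb : 0 < b) : Integrable fun u : ℝ => |u| ^ q * exp (-b * |u| ^ p) := by
  -- a non-integrable function has integral `0`, and this one has a positive integral
  refine .of_integral_ne_zero ?_
  have := Gamma_pos_of_pos (div_pos (show 0 < q + 1 by linarith) hp)
  rw [integral_abs_rpow_mul_exp_neg_mul_abs_rpow hp hq hb]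
  exact (mul_pos (rpow_pos_of_pos hb _) (mul_pos (div_pos two_pos hp) this)).ne'

theorem integral_prod_abs_rpow_pi_single_mul_exp_neg_mul_abs_rpow {ι : Type*} [Fintype ι]
    [DecidableEq ι] {p b : ℝ} (hp : 0 < p) (hb : 0 < b) (j : ι) :
    ∫ ξ : ι → ℝ, ∏ k, |ξ k| ^ (Pi.single j 1 : ι → ℝ) k * exp (-b * |ξ k| ^ p) =
      b ^ (-(Fintype.card ι + 1) / p) *
        (2 / p * Gamma (2 / p) * (2 / p * Gamma (1 / p)) ^ (Fintype.card ι - 1)) := by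
  have hsum : ∑ k, -((Pi.single j 1 : ι → ℝ) k + 1) / p = -(Fintype.card ι + 1) / p := by
    rw [← Finset.sum_div, Finset.sum_neg_distrib, Finset.sum_add_distrib, Finset.sum_pi_single']
    simp [add_comm]
  rw [integral_fintype_prod_volume_eq_prod fun k u =>
    |u| ^ (Pi.single j 1 : ι → ℝ) k * exp (-b * |u| ^ p)]
  simp_rw [integral_abs_rpow_mul_exp_neg_mul_abs_rpow hp (neg_one_lt_pi_single_one j _) hb]
  rw [Finset.prod_mul_distrib, ← rpow_sum_of_pos hb, hsum,
    Fintype.prod_apply_pi_single fun q : ℝ => 2 / p * Gamma ((q + 1) / p)]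
  norm_num

theorem sq_two_div_pi_mul_le_sin_sq {u : ℝ} (hu : |u| ≤ π / 2) : (2 / π * u) ^ 2 ≤ sin u ^ 2 := by
  have h := mul_le_sin (abs_nonneg u) hu
  calc (2 / π * u) ^ 2 = (2 / π * |u|) ^ 2 := by rw [mul_pow, mul_pow, sq_abs]
    _ ≤ sin |u| ^ 2 := pow_le_pow_left₀ (by positivity) h 2
    _ = sin u ^ 2 := by
        rw [← abs_sin_eq_sin_abs_of_abs_le_pi (by linarith [pi_pos]), sq_abs]

theorem sq_two_div_pi_mul_le_symb {d : ℕ} {ξ : Fin d → ℝ} (k : Fin d) (hk : |ξ k| ≤ π) :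
    (2 / π * ξ k) ^ 2 ≤ symb d ξ := by
  have h₁ : (2 / π * (ξ k / 2)) ^ 2 ≤ sin (ξ k / 2) ^ 2 :=
    sq_two_div_pi_mul_le_sin_sq (by rw [abs_div, abs_two]; linarith)
  have h₂ : sin (ξ k / 2) ^ 2 ≤ ∑ i, sin (ξ i / 2) ^ 2 :=
    Finset.single_le_sum (fun i _ => sq_nonneg (sin (ξ i / 2))) (Finset.mem_univ k)
  rw [symb]
  nlinarith

theorem two_div_pi_rpow_mul_abs_rpow_le_symb_rpow {d : ℕ} {s : ℝ} (hs : 0 ≤ s)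
    {ξ : Fin d → ℝ} (k : Fin d) (hk : |ξ k| ≤ π) :
    (2 / π) ^ (2 * s) * |ξ k| ^ (2 * s) ≤ symb d ξ ^ s :=
  calc (2 / π) ^ (2 * s) * |ξ k| ^ (2 * s) = ((2 / π * ξ k) ^ 2) ^ s := by
        rw [← sq_abs, ← rpow_natCast, ← rpow_mul (abs_nonneg _), abs_mul,
          abs_of_pos (by positivity : (0 : ℝ) < 2 / π), mul_rpow (by positivity) (abs_nonneg _)]
        norm_num
    _ ≤ symb d ξ ^ s := rpow_le_rpow (sq_nonneg _) (sq_two_div_pi_mul_le_symb k hk) hs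

theorem exp_neg_mul_symb_rpow_le_prod {d : ℕ} (hd : 1 ≤ d) {s t : ℝ} (hs : 0 ≤ s) (ht : 0 ≤ t)
    {ξ : Fin d → ℝ} (hξ : ∀ k, |ξ k| ≤ π) :
    exp (-(t * symb d ξ ^ s)) ≤ ∏ k, exp (-(t * ((2 / π) ^ (2 * s) / d)) * |ξ k| ^ (2 * s)) := by
  have hd' : (0 : ℝ) < d := by exact_mod_cast hd
  rw [← exp_sum, exp_le_exp]
  calc -(t * symb d ξ ^ s) = -(t / d * ∑ _k : Fin d, symb d ξ ^ s) := by
        rw [Finset.sum_const, Finset.card_univ, Fintype.card_fin, nsmul_eq_mul]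
        field_simp
    _ ≤ -(t / d * ∑ k, (2 / π) ^ (2 * s) * |ξ k| ^ (2 * s)) := by
        gcongr with k
        exact two_div_pi_rpow_mul_abs_rpow_le_symb_rpow hs k (hξ k)
    _ = _ := by
        rw [Finset.mul_sum, ← Finset.sum_neg_distrib]
        congr! 1 with k
        ring

noncomputable def latticeKernelIntegrand (d : ℕ) (s t : ℝ) (x : Fin d → ℤ) (ξ : Fin d → ℝ) : ℂ :=
  Complex.exp (-(t * (symb d ξ) ^ s : ℝ) + Complex.I * ((∑ j, (x j : ℝ) * ξ j : ℝ) : ℂ))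

theorem latticeKernel_eq_setIntegral (d : ℕ) (s t : ℝ) (x : Fin d → ℤ) :
    latticeKernel d s t x = ((2 * π) ^ d)⁻¹ •
      ∫ ξ in Icc (fun _ : Fin d => -π) (fun _ => π), latticeKernelIntegrand d s t x ξ :=
  rfl

theorem continuous_symb_rpow (d : ℕ) {s : ℝ} (hs : 0 ≤ s) :
    Continuous fun ξ => symb d ξ ^ s := by
  unfold symb
  fun_prop (disch := exact Or.inr hs)

theorem continuous_latticeKernelIntegrand (d : ℕ) {s : ℝ} (hs : 0 ≤ s) (t : ℝ)
    (x : Fin d → ℤ) : Continuous (latticeKernelIntegrand d s t x) := by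
  have := continuous_symb_rpow d hs
  unfold latticeKernelIntegrand
  fun_prop

theorem norm_latticeKernelIntegrand (d : ℕ) (s t : ℝ) (x : Fin d → ℤ) (ξ : Fin d → ℝ) :
    ‖latticeKernelIntegrand d s t x ξ‖ = exp (-(t * symb d ξ ^ s)) := by
  simp [latticeKernelIntegrand, Complex.norm_exp]

theorem latticeKernelIntegrand_add_single (d : ℕ) (s t : ℝ) (x : Fin d → ℤ) (j : Fin d)
    (ξ : Fin d → ℝ) :
    latticeKernelIntegrand d s t (x + Pi.single j 1) ξ =
      latticeKernelIntegrand d s t x ξ * Complex.exp (Complex.I * ξ j) := by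
  have : ∑ k, ((x + Pi.single j 1 : Fin d → ℤ) k : ℝ) * ξ k = ∑ k, (x k : ℝ) * ξ k + ξ j := by
    simp [add_mul, Finset.sum_add_distrib, Pi.single_apply]
  rw [latticeKernelIntegrand, latticeKernelIntegrand, this, ← Complex.exp_add]
  push_cast
  ring_nf

theorem norm_latticeKernel_add_single_sub_le (d : ℕ) {s : ℝ} (hs : 0 ≤ s) (t : ℝ)
    (x : Fin d → ℤ) (j : Fin d) :
    ‖latticeKernel d s t (x + Pi.single j 1) - latticeKernel d s t x‖ ≤ ((2 * π) ^ d)⁻¹ *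
      ∫ ξ in Icc (fun _ : Fin d => -π) (fun _ => π), exp (-(t * symb d ξ ^ s)) * |ξ j| := by
  have hint (y : Fin d → ℤ) :=
    (continuous_latticeKernelIntegrand d hs t y).integrableOn_Icc (μ := volume)
      (a := fun _ : Fin d => -π) (b := fun _ => π)
  rw [latticeKernel_eq_setIntegral, latticeKernel_eq_setIntegral, ← smul_sub,
    ← integral_sub (hint _) (hint _), norm_smul, norm_inv, norm_pow, norm_mul, Real.norm_two,
    Real.norm_of_nonneg pi_pos.le]
  gcongr
  refine norm_integral_le_of_norm_le ?_ (.of_forall fun ξ => ?_)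
  · have := continuous_symb_rpow d hs
    exact Continuous.integrableOn_Icc (by fun_prop)
  · rw [latticeKernelIntegrand_add_single, ← mul_sub_one, norm_mul, norm_latticeKernelIntegrand,
      ← Real.norm_eq_abs]
    gcongr
    exact norm_exp_I_mul_ofReal_sub_one_le

theorem setIntegral_exp_neg_mul_symb_rpow_mul_abs_le {d : ℕ} (hd : 1 ≤ d) {s t : ℝ} (hs : 0 < s)
    (ht : 0 < t) (j : Fin d) :
    ∫ ξ in Icc (fun _ : Fin d => -π) (fun _ => π), exp (-(t * symb d ξ ^ s)) * |ξ j| ≤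
      (t * ((2 / π) ^ (2 * s) / d)) ^ (-((d : ℝ) + 1) / (2 * s)) *
        (2 / (2 * s) * Gamma (2 / (2 * s)) * (2 / (2 * s) * Gamma (1 / (2 * s))) ^ (d - 1)) := by
  set b := t * ((2 / π) ^ (2 * s) / d)
  have hb : 0 < b := by positivity
  have hp : 0 < 2 * s := by positivity
  set g : (Fin d → ℝ) → ℝ :=
    fun ξ => ∏ k, |ξ k| ^ (Pi.single j 1 : Fin d → ℝ) k * exp (-b * |ξ k| ^ (2 * s))
  have hg : Integrable g :=
    Integrable.fintype_prod (f := fun k u => |u| ^ (Pi.single j 1 : Fin d → ℝ) k *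
      exp (-b * |u| ^ (2 * s))) fun k => integrable_abs_rpow_mul_exp_neg_mul_abs_rpow hp
        (neg_one_lt_pi_single_one j k) hb
  have hbox : ∀ ξ ∈ Icc (fun _ : Fin d => -π) (fun _ => π),
      exp (-(t * symb d ξ ^ s)) * |ξ j| ≤ g ξ := by
    intro ξ hξ
    simp only [g]
    rw [Finset.prod_mul_distrib, Fintype.prod_abs_rpow_pi_single, mul_comm]
    gcongr
    exact exp_neg_mul_symb_rpow_le_prod hd hs.le ht.le fun k => abs_le.mpr ⟨hξ.1 k, hξ.2 k⟩
  have := continuous_symb_rpow d hs.le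
  calc _ ≤ ∫ ξ in Icc (fun _ : Fin d => -π) (fun _ => π), g ξ :=
        setIntegral_mono_on (Continuous.integrableOn_Icc (by fun_prop)) hg.integrableOn
          measurableSet_Icc hbox
    _ ≤ ∫ ξ, g ξ := setIntegral_le_integral hg (.of_forall fun ξ => by positivity)
    _ = _ := by
        rw [integral_prod_abs_rpow_pi_single_mul_exp_neg_mul_abs_rpow hp hb, Fintype.card_fin]

theorem stmt_5_general (d : ℕ) (hd : 1 ≤ d) (s : ℝ) (hs : 0 < s) :
    ∃ C : ℝ, 0 < C ∧ ∀ t : ℝ, 0 < t → ∀ j : Fin d, ∀ x : Fin d → ℤ,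
      ‖latticeKernel d s t (x + Pi.single j 1) - latticeKernel d s t x‖ ≤
        C * t ^ (-((d : ℝ) + 1) / (2 * s)) := by
  set c := (2 / π) ^ (2 * s) / d
  set K := 2 / (2 * s) * Gamma (2 / (2 * s)) * (2 / (2 * s) * Gamma (1 / (2 * s))) ^ (d - 1)
  have hc : 0 < c := by positivity
  have hK : 0 < K := by
    have := Gamma_pos_of_pos (by positivity : 0 < 2 / (2 * s))
    have := Gamma_pos_of_pos (by positivity : 0 < 1 / (2 * s))
    positivity
  refine ⟨((2 * π) ^ d)⁻¹ * (c ^ (-((d : ℝ) + 1) / (2 * s)) * K), by positivity,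
    fun t ht j x => ?_⟩
  calc _ ≤ ((2 * π) ^ d)⁻¹ * ∫ ξ in Icc (fun _ : Fin d => -π) (fun _ => π),
          exp (-(t * symb d ξ ^ s)) * |ξ j| := norm_latticeKernel_add_single_sub_le d hs.le t x j
    _ ≤ ((2 * π) ^ d)⁻¹ * ((t * c) ^ (-((d : ℝ) + 1) / (2 * s)) * K) := by
        gcongr
        exact setIntegral_exp_neg_mul_symb_rpow_mul_abs_le hd hs ht j
    _ = _ := by
        rw [mul_rpow ht.le hc.le]
        ring

/-- Unit-step increment bound:
`sup_x |G_t^{(s)}(x+e_j) - G_t^{(s)}(x)| ≤ C t^{-(d+1)/(2s)}` for all `t > 0`. -/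
theorem stmt_5 (d : ℕ) (hd : 1 ≤ d) (s : ℝ) (hs : 0 < s) (hs1 : s ≤ 1) :
    ∃ C : ℝ, 0 < C ∧ ∀ t : ℝ, 0 < t → ∀ j : Fin d, ∀ x : Fin d → ℤ,
      ‖latticeKernel d s t (x + Pi.single j 1) - latticeKernel d s t x‖ ≤
        C * t ^ (-((d : ℝ) + 1) / (2 * s)) :=
  stmt_5_general d hd s hs
end

section
/- Let d ≥ 1, s ∈ (0,1]. There exists C = C(d,s) > 0 such that for all t > 0 and all x, y ∈ ℤ^d, |G_t^{(s)}(x-y) - G_t^{(s)}(x)| ≤ C t^{-d/(2s)} min{1, |y| t^{-1/(2s)}}, where |y| is the Euclidean norm of y. -/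
open MeasureTheory Real

/-- Euclidean norm of a lattice point. -/
noncomputable def latNorm {d : ℕ} (y : Fin d → ℤ) : ℝ :=
  Real.sqrt (∑ j, ((y j : ℝ)) ^ 2)

/-!
On the torus the difference of the two kernels is the Fourier integral of
`e^{-t ω(ξ)^s} (e^{-i y·ξ} - 1) e^{i x·ξ}`. The phase factor is at most `min 2 |y·ξ|`, and
`|y·ξ| ≤ d |y| ‖ξ‖_∞`. Jordan's inequality `sin u ≥ 2u/π` on `[0, π/2]` gives
`ω(ξ) ≥ (2‖ξ‖_∞/π)²` on `[-π, π]^d`, so the integrand is dominated by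
`e^{-tκ‖ξ‖_∞^{2s}} min(2, d |y| ‖ξ‖_∞)` with `κ = (2/π)^{2s}`. Extending the integral to all of
`ℝ^d` and rescaling `ξ ↦ t^{-1/(2s)} ξ` turns the two branches of the minimum into
`t^{-d/(2s)}` and `|y| t^{-(d+1)/(2s)}`.
-/

open Set Module

section RadialWeight

variable {E : Type*} [NormedAddCommGroup E] [NormedSpace ℝ E] [FiniteDimensional ℝ E]
  [MeasurableSpace E] [BorelSpace E] (μ : Measure E) [μ.IsAddHaarMeasure]

lemma integrable_norm_rpow_mul_exp_neg_mul_norm_rpow [Nontrivial E] {p q b : ℝ}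
    (hp : 0 < p) (hq : -1 < q) (hb : 0 < b) :
    Integrable (fun x : E => ‖x‖ ^ q * exp (-b * ‖x‖ ^ p)) μ := by
  rw [integrable_fun_norm_addHaar μ (f := fun r => r ^ q * exp (-b * r ^ p))]
  have hq' : -1 < ((finrank ℝ E - 1 : ℕ) : ℝ) + q := by
    have : (0 : ℝ) ≤ (finrank ℝ E - 1 : ℕ) := Nat.cast_nonneg _
    linarith
  refine (integrableOn_rpow_mul_exp_neg_mul_rpow hq' hp hb).congr_fun (fun r hr => ?_)
    measurableSet_Ioi
  simp only [smul_eq_mul]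
  rw [rpow_add hr, rpow_natCast, mul_assoc]

lemma integral_norm_rpow_mul_exp_neg_mul_norm_rpow {p q b : ℝ} (hp : 0 < p) (hb : 0 < b) :
    ∫ x, ‖x‖ ^ q * exp (-b * ‖x‖ ^ p) ∂μ
      = b ^ (-(finrank ℝ E + q) / p) * ∫ x, ‖x‖ ^ q * exp (-‖x‖ ^ p) ∂μ := by
  have hR : 0 < b ^ (-1 / p) := rpow_pos_of_pos hb _
  have hcomp : ∀ x : E, ‖b ^ (-1 / p) • x‖ ^ q * exp (-b * ‖b ^ (-1 / p) • x‖ ^ p)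
      = b ^ (-q / p) * (‖x‖ ^ q * exp (-‖x‖ ^ p)) := fun x => by
    rw [norm_smul, norm_of_nonneg hR.le, mul_rpow hR.le (norm_nonneg x),
      mul_rpow hR.le (norm_nonneg x), ← rpow_mul hb.le, ← rpow_mul hb.le,
      show -1 / p * p = -1 by field_simp, rpow_neg_one,
      show -b * (b⁻¹ * ‖x‖ ^ p) = -‖x‖ ^ p by field_simp, show -1 / p * q = -q / p by ring]
    ring
  have hscale := μ.integral_comp_smul (fun x : E => ‖x‖ ^ q * exp (-b * ‖x‖ ^ p)) (b ^ (-1 / p))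
  simp only [hcomp, integral_const_mul, ← rpow_natCast, ← rpow_mul hb.le, ← rpow_neg hb.le,
    abs_of_pos (rpow_pos_of_pos hb _), smul_eq_mul] at hscale
  calc ∫ x, ‖x‖ ^ q * exp (-b * ‖x‖ ^ p) ∂μ
      = b ^ (-1 / p * finrank ℝ E) * (b ^ (-(-1 / p * finrank ℝ E))
          * ∫ x, ‖x‖ ^ q * exp (-b * ‖x‖ ^ p) ∂μ) := by
        rw [← mul_assoc, ← rpow_add hb, add_neg_cancel, rpow_zero, one_mul]
    _ = b ^ (-(finrank ℝ E + q) / p) * ∫ x, ‖x‖ ^ q * exp (-‖x‖ ^ p) ∂μ := by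
        rw [← hscale, ← mul_assoc, ← rpow_add hb]
        ring_nf

lemma integrable_exp_neg_mul_norm_rpow [Nontrivial E] {p b : ℝ} (hp : 0 < p) (hb : 0 < b) :
    Integrable (fun x : E => exp (-b * ‖x‖ ^ p)) μ := by
  simpa using integrable_norm_rpow_mul_exp_neg_mul_norm_rpow μ hp (q := 0) (by norm_num) hb

lemma integrable_norm_mul_exp_neg_mul_norm_rpow [Nontrivial E] {p b : ℝ} (hp : 0 < p)
    (hb : 0 < b) : Integrable (fun x : E => ‖x‖ * exp (-b * ‖x‖ ^ p)) μ := by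
  simpa using integrable_norm_rpow_mul_exp_neg_mul_norm_rpow μ hp (q := 1) (by norm_num) hb

lemma integral_exp_neg_mul_norm_rpow {p b : ℝ} (hp : 0 < p) (hb : 0 < b) :
    ∫ x, exp (-b * ‖x‖ ^ p) ∂μ = b ^ (-(finrank ℝ E : ℝ) / p) * ∫ x, exp (-‖x‖ ^ p) ∂μ := by
  simpa using integral_norm_rpow_mul_exp_neg_mul_norm_rpow μ (q := 0) hp hb

lemma integral_norm_mul_exp_neg_mul_norm_rpow {p b : ℝ} (hp : 0 < p) (hb : 0 < b) :
    ∫ x, ‖x‖ * exp (-b * ‖x‖ ^ p) ∂μ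
      = b ^ (-(finrank ℝ E + 1 : ℝ) / p) * ∫ x, ‖x‖ * exp (-‖x‖ ^ p) ∂μ := by
  simpa using integral_norm_rpow_mul_exp_neg_mul_norm_rpow μ (q := 1) hp hb

lemma setIntegral_exp_neg_mul_norm_rpow_mul_min_le [Nontrivial E] {p b c : ℝ}
    (hp : 0 < p) (hb : 0 < b) (hc : 0 ≤ c) (S : Set E) :
    ∫ x in S, exp (-b * ‖x‖ ^ p) * min 2 (c * ‖x‖) ∂μ
      ≤ min (2 * ∫ x, exp (-b * ‖x‖ ^ p) ∂μ) (c * ∫ x, ‖x‖ * exp (-b * ‖x‖ ^ p) ∂μ) := by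
  have hint₀ := integrable_exp_neg_mul_norm_rpow μ hp hb
  have hint₁ := integrable_norm_mul_exp_neg_mul_norm_rpow μ hp hb
  have hnonneg : ∀ x : E, 0 ≤ exp (-b * ‖x‖ ^ p) * min 2 (c * ‖x‖) := fun x => by positivity
  have hint : Integrable (fun x : E => exp (-b * ‖x‖ ^ p) * min 2 (c * ‖x‖)) μ :=
    (hint₀.const_mul 2).mono'
      (Continuous.aestronglyMeasurable (by fun_prop (disch := positivity))) (.of_forall fun x => by
        rw [norm_of_nonneg (hnonneg x), mul_comm 2]
        exact mul_le_mul_of_nonneg_left (min_le_left _ _) (exp_pos _).le)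
  refine (setIntegral_le_integral hint (.of_forall hnonneg)).trans (le_min ?_ ?_)
  · rw [← integral_const_mul]
    refine integral_mono hint (hint₀.const_mul 2) fun x => ?_
    rw [mul_comm 2]
    exact mul_le_mul_of_nonneg_left (min_le_left _ _) (exp_pos _).le
  · rw [← integral_const_mul]
    refine integral_mono hint (hint₁.const_mul c) fun x => ?_
    calc exp (-b * ‖x‖ ^ p) * min 2 (c * ‖x‖) ≤ exp (-b * ‖x‖ ^ p) * (c * ‖x‖) :=
          mul_le_mul_of_nonneg_left (min_le_right _ _) (exp_pos _).le
      _ = c * (‖x‖ * exp (-b * ‖x‖ ^ p)) := by ring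

end RadialWeight

lemma two_div_pi_mul_norm_le_sqrt_symb {d : ℕ} {ξ : Fin d → ℝ}
    (hξ : ξ ∈ Icc (fun _ : Fin d => -π) (fun _ : Fin d => π)) :
    2 / π * ‖ξ‖ ≤ √(symb d ξ) := by
  rw [← le_div_iff₀' (by positivity)]
  refine (pi_norm_le_iff_of_nonneg (by positivity)).2 fun j => ?_
  have hj : |ξ j / 2| ≤ π / 2 := by
    rw [abs_div, abs_two]
    exact div_le_div_of_nonneg_right (abs_le.2 ⟨hξ.1 j, hξ.2 j⟩) zero_le_two
  have hjordan := mul_abs_le_abs_sin hj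
  have hsq : (2 / π * |ξ j|) ^ 2 ≤ symb d ξ := by
    calc (2 / π * |ξ j|) ^ 2 = 4 * (2 / π * |ξ j / 2|) ^ 2 := by
          rw [abs_div, abs_two]; ring
      _ ≤ 4 * sin (ξ j / 2) ^ 2 := by
          rw [← sq_abs (sin _)]; gcongr
      _ ≤ symb d ξ := by
          unfold symb
          gcongr
          exact Finset.single_le_sum (f := fun i => sin (ξ i / 2) ^ 2)
            (fun i _ => sq_nonneg _) (Finset.mem_univ j)
  rw [le_div_iff₀' (by positivity), Real.norm_eq_abs]
  simpa [abs_mul, abs_of_pos (div_pos two_pos pi_pos)] using Real.abs_le_sqrt hsq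

lemma norm_exp_add_I_mul_sub_le (r a c : ℝ) :
    ‖Complex.exp (r + Complex.I * a) - Complex.exp (r + Complex.I * c)‖
      ≤ exp r * min 2 |a - c| := by
  have hfactor : Complex.exp (r + Complex.I * a) - Complex.exp (r + Complex.I * c)
      = Complex.exp (r + Complex.I * c) * (Complex.exp (Complex.I * ↑(a - c)) - 1) := by
    rw [mul_sub, ← Complex.exp_add, mul_one]
    push_cast
    ring_nf
  have hunit : ‖Complex.exp (Complex.I * ↑(a - c))‖ = 1 := by
    rw [mul_comm]; exact Complex.norm_exp_ofReal_mul_I _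
  rw [hfactor, norm_mul, Complex.norm_exp]
  simp only [Complex.add_re, Complex.ofReal_re, Complex.mul_re, Complex.I_re, Complex.I_im,
    Complex.ofReal_im, zero_mul, one_mul, sub_self, add_zero]
  refine mul_le_mul_of_nonneg_left (le_min ?_ ?_) (exp_pos r).le
  · calc _ ≤ ‖Complex.exp (Complex.I * ↑(a - c))‖ + ‖(1 : ℂ)‖ := norm_sub_le _ _
      _ = 2 := by rw [hunit, norm_one]; norm_num
  · exact Real.norm_exp_I_mul_ofReal_sub_one_le

lemma latNorm_nonneg {d : ℕ} (y : Fin d → ℤ) : 0 ≤ latNorm y := sqrt_nonneg _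

lemma abs_sum_intCast_mul_le {d : ℕ} (y : Fin d → ℤ) (ξ : Fin d → ℝ) :
    |∑ j, (y j : ℝ) * ξ j| ≤ d * latNorm y * ‖ξ‖ := by
  have hcoord : ∀ j, |(y j : ℝ) * ξ j| ≤ latNorm y * ‖ξ‖ := fun j => by
    rw [abs_mul]
    refine mul_le_mul ?_ (norm_le_pi_norm ξ j) (abs_nonneg _) (sqrt_nonneg _)
    rw [latNorm, ← sqrt_sq_eq_abs]
    exact sqrt_le_sqrt (Finset.single_le_sum (f := fun i => ((y i : ℝ)) ^ 2)
      (fun i _ => sq_nonneg _) (Finset.mem_univ j))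
  calc |∑ j, (y j : ℝ) * ξ j| ≤ ∑ j, |(y j : ℝ) * ξ j| := Finset.abs_sum_le_sum_abs _ _
    _ ≤ ∑ _j : Fin d, latNorm y * ‖ξ‖ := Finset.sum_le_sum fun j _ => hcoord j
    _ = d * latNorm y * ‖ξ‖ := by simp [mul_assoc]

lemma exp_neg_mul_symb_rpow_le {d : ℕ} {s t : ℝ} (hs : 0 < s) (ht : 0 ≤ t) {ξ : Fin d → ℝ}
    (hξ : ξ ∈ Icc (fun _ : Fin d => -π) (fun _ : Fin d => π)) :
    exp (-(t * symb d ξ ^ s)) ≤ exp (-(t * (2 / π) ^ (2 * s)) * ‖ξ‖ ^ (2 * s)) := by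
  have hsymb : symb d ξ ^ s = √(symb d ξ) ^ (2 * s) := by
    rw [rpow_mul (sqrt_nonneg _), rpow_two, sq_sqrt (by unfold symb; positivity)]
  rw [exp_le_exp, neg_mul, neg_le_neg_iff, mul_assoc, hsymb,
    ← mul_rpow (by positivity) (norm_nonneg _)]
  gcongr
  exact two_div_pi_mul_norm_le_sqrt_symb hξ

lemma norm_latticeKernel_sub_le_setIntegral {d : ℕ} {s t : ℝ} (hs : 0 < s) (ht : 0 < t)
    (x y : Fin d → ℤ) :
    ‖latticeKernel d s t (x - y) - latticeKernel d s t x‖ ≤ ((2 * π) ^ d)⁻¹ *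
      ∫ ξ in Icc (fun _ : Fin d => -π) (fun _ : Fin d => π),
        exp (-(t * (2 / π) ^ (2 * s)) * ‖ξ‖ ^ (2 * s)) * min 2 (d * latNorm y * ‖ξ‖) := by
  set K := Icc (fun _ : Fin d => -π) (fun _ : Fin d => π)
  let f : (Fin d → ℤ) → (Fin d → ℝ) → ℂ := fun z ξ =>
    Complex.exp (-(t * (symb d ξ) ^ s : ℝ) + Complex.I * ((∑ j, (z j : ℝ) * ξ j : ℝ) : ℂ))
  have hcont : ∀ z, Continuous (f z) := fun z => by
    unfold f symb
    fun_prop (disch := positivity)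
  have hint : ∀ z, IntegrableOn (f z) K := fun z =>
    (hcont z).continuousOn.integrableOn_compact isCompact_Icc
  have hpoint : ∀ ξ ∈ K, ‖f (x - y) ξ - f x ξ‖
      ≤ exp (-(t * (2 / π) ^ (2 * s)) * ‖ξ‖ ^ (2 * s)) * min 2 (d * latNorm y * ‖ξ‖) := by
    intro ξ hξ
    have hphase : |∑ j, ((x - y) j : ℝ) * ξ j - ∑ j, (x j : ℝ) * ξ j|
        = |∑ j, (y j : ℝ) * ξ j| := by
      rw [← Finset.sum_sub_distrib, ← abs_neg, ← Finset.sum_neg_distrib]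
      congr 1
      refine Finset.sum_congr rfl fun j _ => ?_
      simp only [Pi.sub_apply, Int.cast_sub]
      ring
    simp only [f, ← Complex.ofReal_neg]
    refine (norm_exp_add_I_mul_sub_le _ _ _).trans ?_
    rw [hphase]
    exact mul_le_mul (exp_neg_mul_symb_rpow_le hs ht.le hξ)
      (min_le_min_left _ (abs_sum_intCast_mul_le y ξ)) (by positivity) (exp_pos _).le
  calc ‖latticeKernel d s t (x - y) - latticeKernel d s t x‖
      = ((2 * π) ^ d)⁻¹ * ‖∫ ξ in K, (f (x - y) ξ - f x ξ)‖ := by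
        rw [latticeKernel, latticeKernel, ← smul_sub, ← integral_sub (hint _) (hint _),
          norm_smul, norm_inv, norm_pow, Real.norm_eq_abs, abs_of_pos (by positivity)]
    _ ≤ ((2 * π) ^ d)⁻¹ * ∫ ξ in K, ‖f (x - y) ξ - f x ξ‖ := by
        gcongr; exact norm_integral_le_integral_norm _
    _ ≤ _ := by
        refine mul_le_mul_of_nonneg_left (setIntegral_mono_on ((hint _).sub (hint _)).norm ?_
          measurableSet_Icc hpoint) (by positivity)
        exact ContinuousOn.integrableOn_compact isCompact_Icc
          (Continuous.continuousOn (by fun_prop (disch := positivity)))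

lemma norm_latticeKernel_sub_le {d : ℕ} (hd : 1 ≤ d) {s t : ℝ} (hs : 0 < s) (ht : 0 < t)
    (x y : Fin d → ℤ) :
    ‖latticeKernel d s t (x - y) - latticeKernel d s t x‖ ≤ ((2 * π) ^ d)⁻¹ *
      min (2 * ∫ ξ : Fin d → ℝ, exp (-(t * (2 / π) ^ (2 * s)) * ‖ξ‖ ^ (2 * s)))
        (d * latNorm y *
          ∫ ξ : Fin d → ℝ, ‖ξ‖ * exp (-(t * (2 / π) ^ (2 * s)) * ‖ξ‖ ^ (2 * s))) := by
  have : Nonempty (Fin d) := ⟨⟨0, hd⟩⟩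
  refine (norm_latticeKernel_sub_le_setIntegral hs ht x y).trans ?_
  gcongr
  exact setIntegral_exp_neg_mul_norm_rpow_mul_min_le volume (by positivity) (by positivity)
    (mul_nonneg d.cast_nonneg (latNorm_nonneg y)) _

lemma min_mul_mul_le_max_mul_min {a b x y : ℝ} (hx : 0 ≤ x) (hy : 0 ≤ y) :
    min (a * x) (b * y) ≤ max a b * min x y := by
  rcases le_total x y with h | h
  · rw [min_eq_left h]
    exact (min_le_left _ _).trans (mul_le_mul_of_nonneg_right (le_max_left _ _) hx)
  · rw [min_eq_right h]
    exact (min_le_right _ _).trans (mul_le_mul_of_nonneg_right (le_max_right _ _) hy)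

theorem stmt_6_general (d : ℕ) (hd : 1 ≤ d) (s : ℝ) (hs : 0 < s) :
    ∃ C : ℝ, 0 < C ∧ ∀ t : ℝ, 0 < t → ∀ x y : Fin d → ℤ,
      ‖latticeKernel d s t (x - y) - latticeKernel d s t x‖ ≤
        C * t ^ (-(d : ℝ) / (2 * s)) * min 1 (latNorm y * t ^ (-1 / (2 * s))) := by
  have : Nonempty (Fin d) := ⟨⟨0, hd⟩⟩
  have hp : 0 < 2 * s := by positivity
  set κ : ℝ := (2 / π) ^ (2 * s)
  set A := ∫ ξ : Fin d → ℝ, exp (-‖ξ‖ ^ (2 * s))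
  set B := ∫ ξ : Fin d → ℝ, ‖ξ‖ * exp (-‖ξ‖ ^ (2 * s))
  have hA : 0 < A := integral_exp_pos <| by
    simpa using integrable_exp_neg_mul_norm_rpow volume hp one_pos
  set a := 2 * (κ ^ (-(d : ℝ) / (2 * s)) * A)
  set b := d * (κ ^ (-(d + 1 : ℝ) / (2 * s)) * B)
  refine ⟨((2 * π) ^ d)⁻¹ * max a b, by positivity, fun t ht x y => ?_⟩
  have hsplit : t ^ (-(d + 1 : ℝ) / (2 * s)) = t ^ (-(d : ℝ) / (2 * s)) * t ^ (-1 / (2 * s)) := by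
    rw [← rpow_add ht]; ring_nf
  calc ‖latticeKernel d s t (x - y) - latticeKernel d s t x‖
      ≤ ((2 * π) ^ d)⁻¹ * min (2 * ∫ ξ : Fin d → ℝ, exp (-(t * κ) * ‖ξ‖ ^ (2 * s)))
          (d * latNorm y * ∫ ξ : Fin d → ℝ, ‖ξ‖ * exp (-(t * κ) * ‖ξ‖ ^ (2 * s))) :=
        norm_latticeKernel_sub_le hd hs ht x y
    _ = ((2 * π) ^ d)⁻¹ * (min (a * 1) (b * (latNorm y * t ^ (-1 / (2 * s))))
          * t ^ (-(d : ℝ) / (2 * s))) := by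
        rw [integral_exp_neg_mul_norm_rpow (E := Fin d → ℝ) volume hp (by positivity),
          integral_norm_mul_exp_neg_mul_norm_rpow (E := Fin d → ℝ) volume hp (by positivity),
          finrank_fin_fun, mul_rpow ht.le (by positivity), mul_rpow ht.le (by positivity), hsplit,
          min_mul_of_nonneg _ _ (rpow_nonneg ht.le _)]
        simp only [a, b, A, B]
        ring_nf
    _ ≤ ((2 * π) ^ d)⁻¹ * (max a b * min 1 (latNorm y * t ^ (-1 / (2 * s)))
          * t ^ (-(d : ℝ) / (2 * s))) := by
        gcongr
        exact min_mul_mul_le_max_mul_min zero_le_one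
          (mul_nonneg (latNorm_nonneg y) (rpow_nonneg ht.le _))
    _ = _ := by ring

/-- Pointwise translation-increment bound:
`|G_t^{(s)}(x-y) - G_t^{(s)}(x)| ≤ C t^{-d/(2s)} min{1, |y| t^{-1/(2s)}}`. -/
theorem stmt_6 (d : ℕ) (hd : 1 ≤ d) (s : ℝ) (hs : 0 < s) (hs1 : s ≤ 1) :
    ∃ C : ℝ, 0 < C ∧ ∀ t : ℝ, 0 < t → ∀ x y : Fin d → ℤ,
      ‖latticeKernel d s t (x - y) - latticeKernel d s t x‖ ≤
        C * t ^ (-(d : ℝ) / (2 * s)) * min 1 (latNorm y * t ^ (-1 / (2 * s))) :=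
  stmt_6_general d hd s hs
end

section
/- Let d ≥ 1 and s ∈ (0,1]. For every R > 0 and every family of lattice selections x_t: ℝ^d → ℤ^d satisfying sup_η |x_t(η) - t^{1/(2s)}η| ≤ C_0 uniformly in t, one has sup_{|η|≤R} |t^{d/(2s)} G_t^{(s)}(x_t(η)) - Φ_s(η)| → 0 as t → ∞. -/
open MeasureTheory Real

open Filter

/-- Euclidean norm on `ℝ^d` (as a pi type). -/
noncomputable def eucNorm {d : ℕ} (ζ : Fin d → ℝ) : ℝ :=
  Real.sqrt (∑ j, (ζ j) ^ 2)

/-- The `2s`-stable profile `Φ_s(η) = (2π)^{-d} ∫_{ℝ^d} e^{-|ζ|^{2s}} e^{iη·ζ} dζ`. -/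
noncomputable def stableProfile (d : ℕ) (s : ℝ) (η : Fin d → ℝ) : ℂ :=
  ((2 * π) ^ d)⁻¹ •
    ∫ ζ : Fin d → ℝ,
      Complex.exp (-(eucNorm ζ ^ (2 * s) : ℝ) + Complex.I * ((∑ j, η j * ζ j : ℝ) : ℂ))


open Topology

/-!
Substituting `ξ = u ζ` with `u = t^{-1/(2s)}` turns `t^{d/(2s)} G_t^{(s)}(x)` into a Fourier
integral at frequency `u x` whose amplitude is `exp(-(u⁻² ω(u ζ))^s)` on the dilated box
`u⁻¹ [-π,π]^d` and `0` outside. Since `u⁻² ω(u ζ) = Σ_j ζ_j² sinc(u ζ_j / 2)²`, this tends to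
`|ζ|²` as `u → 0`, and Jordan's inequality `sinc ≥ 2/π` on `[-π/2, π/2]` bounds it below by
`(2/π)² |ζ|²` on the box, so by dominated convergence the amplitudes converge in `L¹` to
`exp(-|ζ|^{2s})`. The frequency `u x_t(η)` lies within `C₀ u` of `η`, which moves the Fourier
integral by at most `C₀ u ∫ |ζ| exp(-|ζ|^{2s})`. Neither error depends on `η`.
-/
lemma sq_rpow_eq_rpow_two_mul {x : ℝ} (hx : 0 ≤ x) (s : ℝ) : (x ^ 2) ^ s = x ^ (2 * s) := by
  rw [← Real.rpow_natCast_mul hx]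
  norm_num

lemma two_div_pi_le_sinc {x : ℝ} (hx : |x| ≤ π / 2) : 2 / π ≤ Real.sinc x := by
  have hsinc_abs : Real.sinc |x| = Real.sinc x := by
    rcases abs_choice x with h | h <;> rw [h]
    exact Real.sinc_neg x
  rw [← hsinc_abs]
  rcases (abs_nonneg x).eq_or_lt with h0 | hpos
  · rw [← h0, Real.sinc_zero, div_le_one pi_pos]
    linarith [pi_gt_three]
  · rw [Real.sinc_of_ne_zero hpos.ne', le_div_iff₀ hpos]
    exact mul_le_sin hpos.le hx

section EuclideanNorm

variable {d : ℕ}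

lemma eucNorm_eq_norm (ζ : Fin d → ℝ) : eucNorm ζ = ‖WithLp.toLp 2 ζ‖ := by
  simp [eucNorm, EuclideanSpace.norm_eq]

lemma eucNorm_nonneg (ζ : Fin d → ℝ) : 0 ≤ eucNorm ζ := Real.sqrt_nonneg _

lemma eucNorm_sq (ζ : Fin d → ℝ) : eucNorm ζ ^ 2 = ∑ j, ζ j ^ 2 :=
  Real.sq_sqrt (Finset.sum_nonneg fun _ _ => sq_nonneg _)

lemma continuous_eucNorm : Continuous (eucNorm : (Fin d → ℝ) → ℝ) := by
  simp_rw [funext eucNorm_eq_norm]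
  fun_prop

lemma eucNorm_smul {c : ℝ} (hc : 0 ≤ c) (ζ : Fin d → ℝ) : eucNorm (c • ζ) = c * eucNorm ζ := by
  rw [eucNorm_eq_norm, eucNorm_eq_norm, WithLp.toLp_smul, norm_smul, Real.norm_of_nonneg hc]

lemma abs_sum_mul_le_eucNorm_mul (f g : Fin d → ℝ) :
    |∑ j, f j * g j| ≤ eucNorm f * eucNorm g := by
  rw [eucNorm_eq_norm, eucNorm_eq_norm]
  convert abs_real_inner_le_norm (WithLp.toLp 2 f) (WithLp.toLp 2 g) using 2
  simp [PiLp.inner_apply, mul_comm]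

lemma integrable_eucNorm_rpow_mul_exp_neg (hd : 1 ≤ d) {q b p : ℝ} (hq : -(d : ℝ) < q)
    (hb : 0 < b) (hp : 0 < p) :
    Integrable fun ζ : Fin d → ℝ => eucNorm ζ ^ q * exp (-b * eucNorm ζ ^ p) := by
  have : Nontrivial (EuclideanSpace ℝ (Fin d)) := by
    have : Nonempty (Fin d) := ⟨⟨0, hd⟩⟩
    infer_instance
  have h := (integrable_fun_norm_addHaar (volume : Measure (EuclideanSpace ℝ (Fin d)))
    (f := fun y => y ^ q * exp (-b * y ^ p))).2 ?_
  · rw [← (PiLp.volume_preserving_toLp (Fin d)).integrable_comp_emb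
      (MeasurableEquiv.toLp 2 _).measurableEmbedding] at h
    simpa [Function.comp_def, ← eucNorm_eq_norm] using h
  · refine (integrableOn_rpow_mul_exp_neg_mul_rpow (s := d - 1 + q) (by linarith) hp hb).congr_fun
      (fun y hy => ?_) measurableSet_Ioi
    rw [finrank_euclideanSpace_fin, smul_eq_mul, ← mul_assoc, ← Real.rpow_natCast,
      Nat.cast_sub hd, Nat.cast_one, ← Real.rpow_add hy]

end EuclideanNorm

/-- `u⁻² ω(u ζ)`, extended continuously to `u = 0`. -/
noncomputable def rescaledSymb (d : ℕ) (u : ℝ) (ζ : Fin d → ℝ) : ℝ :=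
  ∑ j, (ζ j * Real.sinc (u * ζ j / 2)) ^ 2

section Symbol

variable {d : ℕ}

lemma symb_smul (u : ℝ) (ζ : Fin d → ℝ) : symb d (u • ζ) = u ^ 2 * rescaledSymb d u ζ := by
  rw [symb, rescaledSymb, Finset.mul_sum, Finset.mul_sum]
  refine Finset.sum_congr rfl fun j _ => ?_
  simp only [Pi.smul_apply, smul_eq_mul]
  rcases eq_or_ne (u * ζ j / 2) 0 with h | h
  · have h' : u * ζ j = 0 := by linarith
    rw [h, Real.sin_zero, show u ^ 2 * (ζ j * Real.sinc 0) ^ 2 = (u * ζ j) ^ 2 * Real.sinc 0 ^ 2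
      by ring, h']
    simp
  · have hu : u ≠ 0 := by rintro rfl; simp at h
    have hz : ζ j ≠ 0 := by rintro h0; simp [h0] at h
    rw [Real.sinc_of_ne_zero h]
    field_simp
    norm_num

lemma rescaledSymb_nonneg (u : ℝ) (ζ : Fin d → ℝ) : 0 ≤ rescaledSymb d u ζ := by
  unfold rescaledSymb; positivity

lemma rescaledSymb_zero (ζ : Fin d → ℝ) : rescaledSymb d 0 ζ = eucNorm ζ ^ 2 := by
  simp [rescaledSymb, eucNorm_sq]

lemma continuous_rescaledSymb (ζ : Fin d → ℝ) : Continuous fun u => rescaledSymb d u ζ := by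
  unfold rescaledSymb
  fun_prop (disch := exact Real.continuous_sinc)

lemma sq_two_div_pi_mul_eucNorm_sq_le {u : ℝ} {ζ : Fin d → ℝ} (h : ∀ j, |u * ζ j| ≤ π) :
    (2 / π) ^ 2 * eucNorm ζ ^ 2 ≤ rescaledSymb d u ζ := by
  rw [eucNorm_sq, Finset.mul_sum]
  refine Finset.sum_le_sum fun j _ => ?_
  have hsinc : 2 / π ≤ Real.sinc (u * ζ j / 2) :=
    two_div_pi_le_sinc (by rw [abs_div, abs_two]; linarith [h j])
  rw [mul_pow, mul_comm]
  exact mul_le_mul_of_nonneg_left (pow_le_pow_left₀ (by positivity) hsinc 2) (sq_nonneg _)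

end Symbol

noncomputable def heatScale (s t : ℝ) : ℝ := t ^ (-(1 / (2 * s)))

def torusBox (d : ℕ) : Set (Fin d → ℝ) := Set.Icc (fun _ => -π) (fun _ => π)

/-- The integrand of `latticeKernel` without its phase, in the variable `ζ = t^{1/(2s)} ξ`. -/
noncomputable def scaledAmplitude (d : ℕ) (s t : ℝ) (ζ : Fin d → ℝ) : ℝ :=
  (torusBox d).indicator (fun ξ => exp (-(t * symb d ξ ^ s))) (heatScale s t • ζ)

section HeatScale

variable {s t : ℝ}

lemma heatScale_pos (ht : 0 < t) : 0 < heatScale s t := Real.rpow_pos_of_pos ht _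

lemma tendsto_heatScale_atTop (hs : 0 < s) : Tendsto (heatScale s) atTop (𝓝 0) :=
  tendsto_rpow_neg_atTop (by positivity)

lemma rpow_mul_heatScale_pow (ht : 0 < t) (n : ℕ) : t ^ (n / (2 * s)) * heatScale s t ^ n = 1 := by
  rw [heatScale, ← Real.rpow_mul_natCast ht.le, ← Real.rpow_add ht]
  ring_nf
  exact Real.rpow_zero t

lemma heatScale_mul_rpow (ht : 0 < t) : heatScale s t * t ^ (1 / (2 * s)) = 1 := by
  rw [heatScale, ← Real.rpow_add ht, neg_add_cancel, Real.rpow_zero]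

lemma mul_symb_heatScale_smul_rpow {d : ℕ} (hs : 0 < s) (ht : 0 < t) (ζ : Fin d → ℝ) :
    t * symb d (heatScale s t • ζ) ^ s = rescaledSymb d (heatScale s t) ζ ^ s := by
  have hscale : t * (heatScale s t ^ 2) ^ s = 1 := by
    rw [sq_rpow_eq_rpow_two_mul (heatScale_pos ht).le, heatScale, ← Real.rpow_mul ht.le]
    field_simp
    rw [Real.rpow_neg_one, mul_inv_cancel₀ ht.ne']
  rw [symb_smul, Real.mul_rpow (sq_nonneg _) (rescaledSymb_nonneg _ _), ← mul_assoc, hscale,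
    one_mul]

end HeatScale

section ScaledAmplitude

variable {d : ℕ} {s t : ℝ}

lemma mem_torusBox_iff {ξ : Fin d → ℝ} : ξ ∈ torusBox d ↔ ∀ j, |ξ j| ≤ π := by
  simp only [torusBox, Set.mem_Icc, Pi.le_def, abs_le, forall_and]

lemma torusBox_mem_nhds_zero : torusBox d ∈ 𝓝 0 := by
  rw [torusBox, ← Set.pi_univ_Icc]
  exact set_pi_mem_nhds Set.finite_univ fun _ _ =>
    Icc_mem_nhds (by simp [pi_pos]) (by simp [pi_pos])

lemma scaledAmplitude_nonneg (ζ : Fin d → ℝ) : 0 ≤ scaledAmplitude d s t ζ :=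
  Set.indicator_nonneg (fun _ _ => (exp_pos _).le) _

lemma scaledAmplitude_of_mem {ζ : Fin d → ℝ} (hs : 0 < s) (ht : 0 < t)
    (hζ : heatScale s t • ζ ∈ torusBox d) :
    scaledAmplitude d s t ζ = exp (-(rescaledSymb d (heatScale s t) ζ ^ s)) := by
  rw [scaledAmplitude, Set.indicator_of_mem hζ, mul_symb_heatScale_smul_rpow hs ht]

lemma scaledAmplitude_le (hs : 0 < s) (ht : 0 < t) (ζ : Fin d → ℝ) :
    scaledAmplitude d s t ζ ≤ exp (-(2 / π) ^ (2 * s) * eucNorm ζ ^ (2 * s)) := by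
  by_cases hζ : heatScale s t • ζ ∈ torusBox d
  · rw [scaledAmplitude_of_mem hs ht hζ, neg_mul, exp_le_exp, neg_le_neg_iff,
      ← sq_rpow_eq_rpow_two_mul (by positivity), ← sq_rpow_eq_rpow_two_mul (eucNorm_nonneg ζ),
      ← Real.mul_rpow (by positivity) (by positivity)]
    exact Real.rpow_le_rpow (by positivity)
      (sq_two_div_pi_mul_eucNorm_sq_le (mem_torusBox_iff.1 hζ)) hs.le
  · rw [scaledAmplitude, Set.indicator_of_notMem hζ]
    exact (exp_pos _).le

lemma tendsto_scaledAmplitude_atTop (hs : 0 < s) (ζ : Fin d → ℝ) :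
    Tendsto (fun t => scaledAmplitude d s t ζ) atTop (𝓝 (exp (-(eucNorm ζ ^ (2 * s))))) := by
  have hscale := tendsto_heatScale_atTop hs
  have hmem : ∀ᶠ t in atTop, heatScale s t • ζ ∈ torusBox d := by
    have : Tendsto (fun t => heatScale s t • ζ) atTop (𝓝 0) := by
      simpa using hscale.smul_const ζ
    exact this.eventually_mem torusBox_mem_nhds_zero
  have hcont : Continuous fun u => exp (-(rescaledSymb d u ζ ^ s)) :=
    ((continuous_rescaledSymb ζ).rpow_const fun _ => Or.inr hs.le).neg.rexp
  have hlim := (hcont.tendsto 0).comp hscale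
  rw [Function.comp_def, rescaledSymb_zero, sq_rpow_eq_rpow_two_mul (eucNorm_nonneg ζ)] at hlim
  refine hlim.congr' ?_
  filter_upwards [hmem, eventually_gt_atTop 0] with t hζ ht
  rw [scaledAmplitude_of_mem hs ht hζ]

lemma measurable_scaledAmplitude (hs : 0 < s) : Measurable (scaledAmplitude d s t) := by
  have hsymb : Continuous (symb d) := by unfold symb; fun_prop
  refine (Measurable.indicator ?_ measurableSet_Icc).comp (measurable_const_smul _)
  exact (continuous_const.mul (hsymb.rpow_const fun _ => Or.inr hs.le)).neg.rexp.measurable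

lemma integrable_scaledAmplitude (hd : 1 ≤ d) (hs : 0 < s) (ht : 0 < t) :
    Integrable (scaledAmplitude d s t) := by
  refine Integrable.mono' (g := fun ζ => exp (-(2 / π) ^ (2 * s) * eucNorm ζ ^ (2 * s))) ?_
    (measurable_scaledAmplitude hs).aestronglyMeasurable (ae_of_all _ fun ζ => ?_)
  · simpa using integrable_eucNorm_rpow_mul_exp_neg hd (q := 0) (by simp; omega)
      (by positivity : 0 < (2 / π) ^ (2 * s)) (by positivity : (0 : ℝ) < 2 * s)
  · rw [Real.norm_of_nonneg (scaledAmplitude_nonneg ζ)]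
    exact scaledAmplitude_le hs ht ζ

end ScaledAmplitude

lemma integrable_exp_neg_mul_eucNorm_rpow {d : ℕ} (hd : 1 ≤ d) {b p : ℝ} (hb : 0 < b)
    (hp : 0 < p) : Integrable fun ζ : Fin d → ℝ => exp (-b * eucNorm ζ ^ p) := by
  simpa using integrable_eucNorm_rpow_mul_exp_neg hd (q := 0) (by simp; omega) hb hp

lemma tendsto_integral_abs_scaledAmplitude_sub {d : ℕ} (hd : 1 ≤ d) {s : ℝ} (hs : 0 < s) :
    Tendsto (fun t => ∫ ζ, |scaledAmplitude d s t ζ - exp (-(eucNorm ζ ^ (2 * s)))|) atTop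
      (𝓝 0) := by
  have h2s : (0 : ℝ) < 2 * s := by positivity
  have hcont : Continuous fun ζ : Fin d → ℝ => exp (-(eucNorm ζ ^ (2 * s))) :=
    (continuous_eucNorm.rpow_const fun _ => Or.inr h2s.le).neg.rexp
  have hbound : Integrable fun ζ : Fin d → ℝ =>
      exp (-(2 / π) ^ (2 * s) * eucNorm ζ ^ (2 * s)) + exp (-(eucNorm ζ ^ (2 * s))) :=
    (integrable_exp_neg_mul_eucNorm_rpow hd (by positivity) h2s).add
      (by simpa using integrable_exp_neg_mul_eucNorm_rpow hd one_pos h2s)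
  have hDCT := tendsto_integral_filter_of_dominated_convergence (l := atTop) (f := fun _ => 0)
    (F := fun t ζ => |scaledAmplitude d s t ζ - exp (-(eucNorm ζ ^ (2 * s)))|) _
    (Eventually.of_forall fun t =>
      ((measurable_scaledAmplitude hs).aestronglyMeasurable.sub
        hcont.aestronglyMeasurable).norm)
    (by
      filter_upwards [eventually_gt_atTop 0] with t ht
      refine ae_of_all _ fun ζ => ?_
      rw [Real.norm_eq_abs, abs_abs]
      refine (abs_sub _ _).trans (add_le_add ?_ (abs_of_pos (exp_pos _)).le)
      rw [abs_of_nonneg (scaledAmplitude_nonneg ζ)]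
      exact scaledAmplitude_le hs ht ζ)
    hbound
    (ae_of_all _ fun ζ => by
      simpa using ((tendsto_scaledAmplitude_atTop hs ζ).sub_const
        (exp (-(eucNorm ζ ^ (2 * s))))).abs)
  simpa using hDCT

noncomputable def planeWave {d : ℕ} (y ζ : Fin d → ℝ) : ℂ :=
  Complex.exp (Complex.I * ((∑ j, y j * ζ j : ℝ) : ℂ))

section PlaneWave

variable {d : ℕ}

lemma norm_planeWave (y ζ : Fin d → ℝ) : ‖planeWave y ζ‖ = 1 :=
  Complex.norm_exp_I_mul_ofReal _

lemma continuous_planeWave (y : Fin d → ℝ) : Continuous (planeWave y) := by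
  unfold planeWave; fun_prop

lemma norm_planeWave_sub_le (y y' ζ : Fin d → ℝ) :
    ‖planeWave y ζ - planeWave y' ζ‖ ≤ eucNorm (y - y') * eucNorm ζ := by
  have hsplit : planeWave y ζ - planeWave y' ζ =
      planeWave y' ζ * (Complex.exp (Complex.I * ((∑ j, (y - y') j * ζ j : ℝ) : ℂ)) - 1) := by
    simp only [planeWave, Pi.sub_apply, sub_mul, Finset.sum_sub_distrib, mul_sub, mul_one,
      ← Complex.exp_add, Complex.ofReal_sub]
    ring_nf
  rw [hsplit, norm_mul, norm_planeWave, one_mul]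
  exact Real.norm_exp_I_mul_ofReal_sub_one_le.trans
    ((Real.norm_eq_abs _).trans_le (abs_sum_mul_le_eucNorm_mul _ _))

lemma integrable_ofReal_mul_planeWave {A : (Fin d → ℝ) → ℝ} (hA : Integrable A)
    (y : Fin d → ℝ) : Integrable fun ζ => (A ζ : ℂ) * planeWave y ζ :=
  hA.ofReal.mul_bdd (continuous_planeWave y).aestronglyMeasurable
    (ae_of_all _ fun ζ => (norm_planeWave y ζ).le)

lemma norm_integral_mul_planeWave_sub_le {A B : (Fin d → ℝ) → ℝ} (hA : Integrable A)
    (hB : Integrable B) (hB_nonneg : 0 ≤ B) (hB_moment : Integrable fun ζ => eucNorm ζ * B ζ)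
    (y y' : Fin d → ℝ) :
    ‖(∫ ζ, (A ζ : ℂ) * planeWave y ζ) - ∫ ζ, (B ζ : ℂ) * planeWave y' ζ‖ ≤
      (∫ ζ, |A ζ - B ζ|) + eucNorm (y - y') * ∫ ζ, eucNorm ζ * B ζ := by
  have hpointwise : ∀ ζ, ‖(A ζ : ℂ) * planeWave y ζ - (B ζ : ℂ) * planeWave y' ζ‖ ≤
      |A ζ - B ζ| + eucNorm (y - y') * (eucNorm ζ * B ζ) := fun ζ => by
    have hsplit : (A ζ : ℂ) * planeWave y ζ - (B ζ : ℂ) * planeWave y' ζ =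
        ((A ζ - B ζ : ℝ) : ℂ) * planeWave y ζ + (B ζ : ℂ) * (planeWave y ζ - planeWave y' ζ) := by
      push_cast; ring
    rw [hsplit]
    refine (norm_add_le _ _).trans (add_le_add ?_ ?_)
    · rw [norm_mul, norm_planeWave, mul_one, Complex.norm_real, Real.norm_eq_abs]
    · rw [norm_mul, Complex.norm_real, Real.norm_of_nonneg (hB_nonneg ζ)]
      calc B ζ * ‖planeWave y ζ - planeWave y' ζ‖
          ≤ B ζ * (eucNorm (y - y') * eucNorm ζ) :=
            mul_le_mul_of_nonneg_left (norm_planeWave_sub_le y y' ζ) (hB_nonneg ζ)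
        _ = eucNorm (y - y') * (eucNorm ζ * B ζ) := by ring
  have hAB : Integrable fun ζ => |A ζ - B ζ| := (hA.sub hB).abs
  rw [← integral_sub (integrable_ofReal_mul_planeWave hA y)
    (integrable_ofReal_mul_planeWave hB y'), ← integral_const_mul,
    ← integral_add hAB (hB_moment.const_mul _)]
  exact norm_integral_le_of_norm_le (hAB.add (hB_moment.const_mul _)) (ae_of_all _ hpointwise)

end PlaneWave

lemma cexp_neg_add_I_mul (a θ : ℝ) :
    Complex.exp (-(a : ℂ) + Complex.I * θ) = (exp (-a) : ℂ) * Complex.exp (Complex.I * θ) := by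
  rw [Complex.exp_add, Complex.ofReal_exp, Complex.ofReal_neg]

lemma stableProfile_eq (d : ℕ) (s : ℝ) (η : Fin d → ℝ) :
    stableProfile d s η =
      ((2 * π) ^ d)⁻¹ • ∫ ζ, (exp (-(eucNorm ζ ^ (2 * s))) : ℂ) * planeWave η ζ := by
  simp only [stableProfile, cexp_neg_add_I_mul, planeWave]

lemma rpow_smul_latticeKernel {d : ℕ} {s t : ℝ} (ht : 0 < t) (x : Fin d → ℤ) :
    (t ^ ((d : ℝ) / (2 * s)) : ℝ) • latticeKernel d s t x =
      ((2 * π) ^ d)⁻¹ • ∫ ζ, (scaledAmplitude d s t ζ : ℂ) *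
        planeWave (heatScale s t • fun j => (x j : ℝ)) ζ := by
  set c := heatScale s t
  have hc := heatScale_pos (s := s) ht
  set F : (Fin d → ℝ) → ℂ := fun ξ =>
    Complex.exp (-(t * (symb d ξ) ^ s : ℝ) + Complex.I * ((∑ j, (x j : ℝ) * ξ j : ℝ) : ℂ))
  have hF : ∀ ζ, (torusBox d).indicator F (c • ζ) =
      (scaledAmplitude d s t ζ : ℂ) * planeWave (c • fun j => (x j : ℝ)) ζ := fun ζ => by
    have hphase : ∑ j, (x j : ℝ) * (c • ζ) j = ∑ j, (c • fun j => (x j : ℝ)) j * ζ j :=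
      Finset.sum_congr rfl fun j _ => by simp only [Pi.smul_apply, smul_eq_mul]; ring
    by_cases hζ : c • ζ ∈ torusBox d
    · rw [scaledAmplitude, Set.indicator_of_mem hζ, Set.indicator_of_mem hζ]
      simp only [F, cexp_neg_add_I_mul, hphase, planeWave]
    · rw [scaledAmplitude, Set.indicator_of_notMem hζ, Set.indicator_of_notMem hζ,
        Complex.ofReal_zero, zero_mul]
  have hchange :
      ∫ ξ, (torusBox d).indicator F ξ = c ^ d • ∫ ζ, (torusBox d).indicator F (c • ζ) := by
    rw [Measure.integral_comp_smul, Module.finrank_fintype_fun_eq_card, Fintype.card_fin, smul_smul,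
      abs_of_pos (by positivity), mul_inv_cancel₀ (by positivity), one_smul]
  rw [latticeKernel, ← integral_indicator measurableSet_Icc, ← torusBox, hchange, smul_comm,
    smul_smul, smul_smul, mul_assoc, rpow_mul_heatScale_pow ht, mul_one]
  simp only [hF]

lemma norm_rpow_smul_latticeKernel_sub_stableProfile_le {d : ℕ} (hd : 1 ≤ d) {s t : ℝ}
    (hs : 0 < s) (ht : 0 < t) {C₀ : ℝ} (x : Fin d → ℤ) (η : Fin d → ℝ)
    (hx : eucNorm (fun j => (x j : ℝ) - t ^ (1 / (2 * s)) * η j) ≤ C₀) :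
    ‖(t ^ ((d : ℝ) / (2 * s)) : ℝ) • latticeKernel d s t x - stableProfile d s η‖ ≤
      ((2 * π) ^ d)⁻¹ * ((∫ ζ, |scaledAmplitude d s t ζ - exp (-(eucNorm ζ ^ (2 * s)))|) +
        C₀ * heatScale s t * ∫ ζ : Fin d → ℝ, eucNorm ζ * exp (-(eucNorm ζ ^ (2 * s)))) := by
  have h2s : (0 : ℝ) < 2 * s := by positivity
  have hc := heatScale_pos (s := s) ht
  have hfreq : eucNorm ((heatScale s t • fun j => (x j : ℝ)) - η) ≤ C₀ * heatScale s t := by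
    have : (heatScale s t • fun j => (x j : ℝ)) - η =
        heatScale s t • fun j => (x j : ℝ) - t ^ (1 / (2 * s)) * η j := by
      ext j
      simp only [Pi.sub_apply, Pi.smul_apply, smul_eq_mul, mul_sub, ← mul_assoc,
        heatScale_mul_rpow ht, one_mul]
    rw [this, eucNorm_smul hc.le, mul_comm]
    exact mul_le_mul_of_nonneg_right hx hc.le
  have hmoment : Integrable fun ζ : Fin d → ℝ => eucNorm ζ * exp (-(eucNorm ζ ^ (2 * s))) := by
    simpa using integrable_eucNorm_rpow_mul_exp_neg hd (q := 1) (by linarith) one_pos h2s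
  rw [rpow_smul_latticeKernel ht, stableProfile_eq, ← smul_sub, norm_smul, Real.norm_of_nonneg
    (by positivity)]
  gcongr
  refine (norm_integral_mul_planeWave_sub_le (integrable_scaledAmplitude hd hs ht)
    (by simpa using integrable_exp_neg_mul_eucNorm_rpow hd one_pos h2s)
    (fun ζ => (exp_pos _).le) hmoment _ _).trans ?_
  gcongr
  exact integral_nonneg fun ζ => mul_nonneg (eucNorm_nonneg ζ) (exp_pos _).le

theorem stmt_16_general (d : ℕ) (hd : 1 ≤ d) (s : ℝ) (hs : 0 < s)
    (R : ℝ) (C₀ : ℝ)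
    (xt : ℝ → (Fin d → ℝ) → (Fin d → ℤ))
    (hxt : ∀ t : ℝ, 0 < t → ∀ η : Fin d → ℝ,
      eucNorm (fun j => ((xt t η j : ℝ) - t ^ (1 / (2 * s)) * η j)) ≤ C₀) :
    ∀ ε : ℝ, 0 < ε → ∃ T : ℝ, ∀ t : ℝ, T ≤ t → ∀ η : Fin d → ℝ, eucNorm η ≤ R →
      ‖(t ^ ((d : ℝ) / (2 * s)) : ℝ) • latticeKernel d s t (xt t η)
          - stableProfile d s η‖ < ε := by
  intro ε hε
  set M := ∫ ζ : Fin d → ℝ, eucNorm ζ * exp (-(eucNorm ζ ^ (2 * s)))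
  have herror : Tendsto (fun t => ((2 * π) ^ d)⁻¹ *
      ((∫ ζ, |scaledAmplitude d s t ζ - exp (-(eucNorm ζ ^ (2 * s)))|) +
        C₀ * heatScale s t * M)) atTop (𝓝 0) := by
    simpa using ((tendsto_integral_abs_scaledAmplitude_sub hd hs).add
      (((tendsto_heatScale_atTop hs).const_mul C₀).mul_const M)).const_mul ((2 * π) ^ d)⁻¹
  obtain ⟨T, hT⟩ := eventually_atTop.1
    ((herror.eventually (gt_mem_nhds hε)).and (eventually_gt_atTop 0))
  refine ⟨T, fun t htT η _ => ?_⟩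
  obtain ⟨hsmall, ht⟩ := hT t htT
  exact (norm_rpow_smul_latticeKernel_sub_stableProfile_le hd hs ht _ η (hxt t ht η)).trans_lt
    hsmall

/-- Local limit scaling: for any family of lattice selections `x_t` with
`sup_η |x_t(η) - t^{1/(2s)} η| ≤ C₀` uniformly in `t`, one has
`sup_{|η|≤R} |t^{d/(2s)} G_t^{(s)}(x_t(η)) - Φ_s(η)| → 0` as `t → ∞`. -/
theorem stmt_16 (d : ℕ) (hd : 1 ≤ d) (s : ℝ) (hs : 0 < s) (hs1 : s ≤ 1)
    (R : ℝ) (hR : 0 < R) (C₀ : ℝ) (hC₀ : 0 < C₀)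
    (xt : ℝ → (Fin d → ℝ) → (Fin d → ℤ))
    (hxt : ∀ t : ℝ, 0 < t → ∀ η : Fin d → ℝ,
      eucNorm (fun j => ((xt t η j : ℝ) - t ^ (1 / (2 * s)) * η j)) ≤ C₀) :
    ∀ ε : ℝ, 0 < ε → ∃ T : ℝ, ∀ t : ℝ, T ≤ t → ∀ η : Fin d → ℝ, eucNorm η ≤ R →
      ‖(t ^ ((d : ℝ) / (2 * s)) : ℝ) • latticeKernel d s t (xt t η)
          - stableProfile d s η‖ < ε :=
  stmt_16_general d hd s hs R C₀ xt hxt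
end
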